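/- In ℤ⁹, the set S = {v₁,...,v₇} of 0/1-vectors with supports {1,2,4}, {1,2,5}, {2,3,6}, {2,3,7}, {1,3,8}, {1,3,9}, {2,4,6} is not saturated: v = ε₁+ε₂+ε₃ equals (1/3)(v₁+v₂+v₃+v₄+v₅+v₆) and equals v₁+v₃−v₇, but v is not a nonnegative-integer combination of v₁,...,v₇. -/
import Mathlib


/-- The quasi-basis vectors `eᵢ = εᵢ − (1/9)∑ⱼ εⱼ` in `ℚ⁹`; they satisfy `∑ᵢ eᵢ = 0`. -/
def e (i : Fin 9) : Fin 9 → ℚ :=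
  fun j => (if j = i then 1 else 0) - 1 / 9

/-- The seven 0/1-vectors (in quasi-coordinates) with supports
`{1,2,4}, {1,2,5}, {2,3,6}, {2,3,7}, {1,3,8}, {1,3,9}, {2,4,6}` (1-indexed). -/
def w : Fin 7 → (Fin 9 → ℚ) :=
  ![e 0 + e 1 + e 3, e 0 + e 1 + e 4, e 1 + e 2 + e 5, e 1 + e 2 + e 6,
    e 0 + e 2 + e 7, e 0 + e 2 + e 8, e 1 + e 3 + e 5]

set_option maxHeartbeats 1000000 in
/-- This set is not saturated: `v = e₁+e₂+e₃` equals `(1/3)(v₁+...+v₆)` and equals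
`v₁ + v₃ − v₇`, but `v` is not a nonnegative-integer combination of `v₁,...,v₇`. -/
theorem n9k3_NSS :
    e 0 + e 1 + e 2 = ((1:ℚ)/3) • (w 0 + w 1 + w 2 + w 3 + w 4 + w 5) ∧
    e 0 + e 1 + e 2 = w 0 + w 2 - w 6 ∧
    ¬ ∃ m : Fin 7 → ℕ, e 0 + e 1 + e 2 = ∑ i, (m i : ℚ) • w i := by
  have hw0 : w 0 = e 0 + e 1 + e 3 := rfl
  have hw1 : w 1 = e 0 + e 1 + e 4 := rfl
  have hw2 : w 2 = e 1 + e 2 + e 5 := rfl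
  have hw3 : w 3 = e 1 + e 2 + e 6 := rfl
  have hw4 : w 4 = e 0 + e 2 + e 7 := rfl
  have hw5 : w 5 = e 0 + e 2 + e 8 := rfl
  have hw6 : w 6 = e 1 + e 3 + e 5 := rfl
  refine ⟨?_, ?_, ?_⟩
  · rw [hw0, hw1, hw2, hw3, hw4, hw5]
    funext j; fin_cases j <;> simp [e] <;> norm_num
  · rw [hw0, hw2, hw6]
    funext j; fin_cases j <;> simp [e] <;> norm_num
  · rintro ⟨m, h⟩
    rw [Fin.sum_univ_seven, hw0, hw1, hw2, hw3, hw4, hw5, hw6] at h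
    have h0 := congrFun h 0; have h1 := congrFun h 1; have h2 := congrFun h 2
    have h3 := congrFun h 3; have h5 := congrFun h 5
    simp [e] at h0 h1 h2 h3 h5
    have key : (15:ℚ) = 15 * m 0 + 6 * m 1 + 6 * m 2 + 6 * m 3 + 6 * m 4 + 6 * m 5 + 6 * m 6 := by
      have h4 := congrFun h 4; have h6 := congrFun h 6
      have h7 := congrFun h 7; have h8 := congrFun h 8
      simp [e] at h4 h6 h7 h8
      linarith [h0, h1, h2, h3, h4, h5, h6, h7, h8]
    have keyN : 15 = 15 * m 0 + 6 * m 1 + 6 * m 2 + 6 * m 3 + 6 * m 4 + 6 * m 5 + 6 * m 6 := by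
      exact_mod_cast key
    have hm : m 0 = 1 ∧ m 1 = 0 ∧ m 2 = 0 ∧ m 3 = 0 ∧ m 4 = 0 ∧ m 5 = 0 ∧ m 6 = 0 := by omega
    obtain ⟨a0, a1, a2, a3, a4, a5, a6⟩ := hm
    rw [a0, a1, a2, a3, a4, a5, a6] at h2
    norm_num at h2
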